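/- Let D = [0,1]^d, and let A ⊆ D be an open set with nonempty topological frontier ∂A. Define the signed distance function d_A : ℝ^d → ℝ by d_A(x) = −dist(x, ∂A) if x belongs to the closure of A, and d_A(x) = dist(x, ∂A) otherwise. Then for every 1-Lipschitz function φ : ℝ^d → ℝ with φ = 0 on ∂A, one has ∫_D φ(x)(1/2 − 𝟙_A(x)) dx ≤ ∫_D d_A(x)(1/2 − 𝟙_A(x)) dx; that is, d_A minimizes the functional φ ↦ −∫_D φ(x)(1/2 − 𝟙_A(x)) dx over all 1-Lipschitz functions vanishing on ∂A. -/

import Mathlib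

open MeasureTheory

open Classical in
/-- The signed distance function of a set `A` with nonempty frontier:
`d_A(x) = -dist(x, ∂A)` on the closure of `A` and `d_A(x) = dist(x, ∂A)` otherwise. -/
noncomputable def signedDistFrontier {d : ℕ} (A : Set (EuclideanSpace ℝ (Fin d)))
    (x : EuclideanSpace ℝ (Fin d)) : ℝ :=
  if x ∈ closure A then -Metric.infDist x (frontier A) else Metric.infDist x (frontier A)

/-!
The inequality already holds pointwise. A 1-Lipschitz `φ` vanishing on `∂A` satisfies
`|φ| ≤ dist(·, ∂A)`, so `d_A ≤ φ` on `A`, where the weight `1/2 - 𝟙_A` is negative, and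
`φ ≤ d_A` off `A`, where it is positive (on `closure A \ A ⊆ ∂A` both vanish, as `A` is open).
Both integrands are integrable on the compact cube.
-/

theorem LipschitzWith.abs_le_mul_infDist {X : Type*} [PseudoMetricSpace X] {K : NNReal}
    {f : X → ℝ} (hf : LipschitzWith K f) {s : Set X} (hs : s.Nonempty)
    (hf0 : ∀ y ∈ s, f y = 0) (x : X) : |f x| ≤ K * Metric.infDist x s := by
  have : Nonempty s := hs.to_subtype
  rw [Metric.infDist_eq_iInf, Real.mul_iInf_of_nonneg K.coe_nonneg]
  refine le_ciInf fun ⟨y, hy⟩ => ?_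
  simpa [hf0 y hy, Real.dist_eq] using hf.dist_le_mul x y

theorem isCompact_unitCube (d : ℕ) :
    IsCompact {x : EuclideanSpace ℝ (Fin d) | ∀ i, x i ∈ Set.Icc (0 : ℝ) 1} := by
  have h := (isCompact_univ_pi fun _ : Fin d => isCompact_Icc (a := (0 : ℝ)) (b := 1))
  rw [← (EuclideanSpace.equiv (Fin d) ℝ).toHomeomorph.isCompact_preimage] at h
  convert h using 1
  ext x
  simp only [Set.mem_ofPred_eq, Set.mem_preimage, Set.mem_univ_pi]
  rfl

section SignedDist

variable {d : ℕ}

theorem abs_signedDistFrontier (A : Set (EuclideanSpace ℝ (Fin d)))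
    (x : EuclideanSpace ℝ (Fin d)) :
    |signedDistFrontier A x| = Metric.infDist x (frontier A) := by
  unfold signedDistFrontier
  split_ifs <;> simp [abs_of_nonneg Metric.infDist_nonneg]

theorem measurable_signedDistFrontier (A : Set (EuclideanSpace ℝ (Fin d))) :
    Measurable (signedDistFrontier A) :=
  Measurable.ite isClosed_closure.measurableSet
    (Metric.continuous_infDist_pt _).neg.measurable (Metric.continuous_infDist_pt _).measurable

variable {A : Set (EuclideanSpace ℝ (Fin d))} {φ : EuclideanSpace ℝ (Fin d) → ℝ}
  {x : EuclideanSpace ℝ (Fin d)}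

theorem signedDistFrontier_le_of_mem_closure (hA : (frontier A).Nonempty)
    (hφ : LipschitzWith 1 φ) (hφ0 : ∀ y ∈ frontier A, φ y = 0) (hx : x ∈ closure A) :
    signedDistFrontier A x ≤ φ x := by
  have : |φ x| ≤ Metric.infDist x (frontier A) := by
    simpa using hφ.abs_le_mul_infDist hA hφ0 x
  rw [signedDistFrontier, if_pos hx]
  linarith [neg_abs_le (φ x)]

theorem le_signedDistFrontier_of_notMem (hAopen : IsOpen A) (hA : (frontier A).Nonempty)
    (hφ : LipschitzWith 1 φ) (hφ0 : ∀ y ∈ frontier A, φ y = 0) (hx : x ∉ A) :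
    φ x ≤ signedDistFrontier A x := by
  by_cases hxc : x ∈ closure A
  · have hxf : x ∈ frontier A := by rw [frontier, hAopen.interior_eq]; exact ⟨hxc, hx⟩
    rw [signedDistFrontier, if_pos hxc, Metric.infDist_zero_of_mem hxf, hφ0 x hxf, neg_zero]
  · have : |φ x| ≤ Metric.infDist x (frontier A) := by
      simpa using hφ.abs_le_mul_infDist hA hφ0 x
    rw [signedDistFrontier, if_neg hxc]
    linarith [le_abs_self (φ x)]

theorem mul_half_sub_indicator_le_signedDistFrontier_mul (hAopen : IsOpen A)
    (hA : (frontier A).Nonempty) (hφ : LipschitzWith 1 φ) (hφ0 : ∀ y ∈ frontier A, φ y = 0)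
    (x : EuclideanSpace ℝ (Fin d)) :
    φ x * (1 / 2 - A.indicator (fun _ => (1 : ℝ)) x) ≤
      signedDistFrontier A x * (1 / 2 - A.indicator (fun _ => (1 : ℝ)) x) := by
  by_cases hx : x ∈ A
  · have := signedDistFrontier_le_of_mem_closure hA hφ hφ0 (subset_closure hx)
    rw [Set.indicator_of_mem hx]
    linarith
  · have := le_signedDistFrontier_of_notMem hAopen hA hφ hφ0 hx
    rw [Set.indicator_of_notMem hx]
    linarith

end SignedDist

theorem MeasureTheory.IntegrableOn.mul_half_sub_indicator {X : Type*} [MeasurableSpace X]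
    {μ : Measure X} {s A : Set X} {f : X → ℝ} (hf : IntegrableOn f s μ) (hA : MeasurableSet A) :
    IntegrableOn (fun x => f x * (1 / 2 - A.indicator (fun _ => (1 : ℝ)) x)) s μ := by
  refine hf.mul_bdd (c := 1) ((measurable_const.sub
    ((measurable_indicator_const_iff 1).2 hA)).aestronglyMeasurable) (ae_of_all _ fun x => ?_)
  by_cases hx : x ∈ A <;> norm_num [hx, abs_le]

theorem integrableOn_signedDistFrontier {d : ℕ} (A : Set (EuclideanSpace ℝ (Fin d)))
    {K : Set (EuclideanSpace ℝ (Fin d))} (hK : IsCompact K) :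
    IntegrableOn (signedDistFrontier A) K :=
  Integrable.mono' ((Metric.continuous_infDist_pt _).continuousOn.integrableOn_compact hK)
    (measurable_signedDistFrontier A).aestronglyMeasurable
    (ae_of_all _ fun x => (abs_signedDistFrontier A x).le)

theorem signedDist_maximizes_integral_general
    (d : ℕ) (D : Set (EuclideanSpace ℝ (Fin d)))
    (hD : D = {x : EuclideanSpace ℝ (Fin d) | ∀ i, x i ∈ Set.Icc (0 : ℝ) 1})
    (A : Set (EuclideanSpace ℝ (Fin d))) (hAopen : IsOpen A)
    (hA : (frontier A).Nonempty)
    (φ : EuclideanSpace ℝ (Fin d) → ℝ) (hφ : LipschitzWith 1 φ)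
    (hφ0 : ∀ y ∈ frontier A, φ y = 0) :
    ∫ x in D, φ x * (1 / 2 - A.indicator (fun _ => (1 : ℝ)) x) ≤
      ∫ x in D, signedDistFrontier A x * (1 / 2 - A.indicator (fun _ => (1 : ℝ)) x) := by
  have hDcpt : IsCompact D := hD ▸ isCompact_unitCube d
  exact setIntegral_mono_on
    ((hφ.continuous.continuousOn.integrableOn_compact hDcpt).mul_half_sub_indicator
      hAopen.measurableSet)
    ((integrableOn_signedDistFrontier A hDcpt).mul_half_sub_indicator hAopen.measurableSet)
    hDcpt.measurableSet fun x _ =>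
      mul_half_sub_indicator_le_signedDistFrontier_mul hAopen hA hφ hφ0 x

/-- Over all 1-Lipschitz functions vanishing on `∂A`, the signed distance function of `A`
minimizes `φ ↦ -∫_D φ(x) (1/2 - 𝟙_A(x)) dx`, where `D = [0,1]^d`; equivalently,
`∫_D φ (1/2 - 𝟙_A) ≤ ∫_D d_A (1/2 - 𝟙_A)` for every such `φ`. -/
theorem signedDist_maximizes_integral
    (d : ℕ) (D : Set (EuclideanSpace ℝ (Fin d)))
    (hD : D = {x : EuclideanSpace ℝ (Fin d) | ∀ i, x i ∈ Set.Icc (0 : ℝ) 1})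
    (A : Set (EuclideanSpace ℝ (Fin d))) (hAopen : IsOpen A) (hAD : A ⊆ D)
    (hA : (frontier A).Nonempty)
    (φ : EuclideanSpace ℝ (Fin d) → ℝ) (hφ : LipschitzWith 1 φ)
    (hφ0 : ∀ y ∈ frontier A, φ y = 0) :
    ∫ x in D, φ x * (1 / 2 - A.indicator (fun _ => (1 : ℝ)) x) ≤
      ∫ x in D, signedDistFrontier A x * (1 / 2 - A.indicator (fun _ => (1 : ℝ)) x) :=
  signedDist_maximizes_integral_general d D hD A hAopen hA φ hφ hφ0
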